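/- For fixed λ > 0, the regularized upper incomplete gamma function a ↦ Q(a,λ) = Γ(a,λ)/Γ(a) is strictly increasing on (0,∞), tends to 1 as a → ∞, and satisfies 0 < Q(a,λ) < 1 for all a > 0. -/

import Mathlib

/-!
Split `Γ(a) = γ(a, λ) + Γ(a, λ)` at `t = λ`. For `a < b` write `t^(b-1) = t^(b-a) t^(a-1)`: the
factor `t^(b-a)` is at most `λ^(b-a)` below `λ` and exceeds it above, so
`γ(b, λ) ≤ λ^(b-a) γ(a, λ)` while `Γ(b, λ) > λ^(b-a) Γ(a, λ)`; hence the upper share `Q(·, λ)`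
strictly grows. The same comparison, with `a = 1` and the threshold `2λ` in the upper integral,
gives `γ(b, λ) / Γ(b) ≤ 2^(1-b) γ(1, λ) / Γ(1, 2λ)`, so `Q(b, λ) = 1 - γ(b, λ) / Γ(b) → 1`.
-/

open Real Filter

/-- Upper incomplete gamma function `Γ(a, x) = ∫_x^∞ t^(a-1) e^(-t) dt`. -/
noncomputable def upperGamma (a x : ℝ) : ℝ := ∫ t in Set.Ioi x, t ^ (a - 1) * Real.exp (-t)

/-- Regularized upper incomplete gamma function `Q(a, x) = Γ(a, x) / Γ(a)`. -/
noncomputable def regGamma (a x : ℝ) : ℝ := upperGamma a x / Real.Gamma a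

open MeasureTheory Set Topology

section

variable {X : Type*} [MeasurableSpace X] {μ : Measure X} {s : Set X} {f g : X → ℝ}

lemma setIntegral_pos_of_forall_pos (hs : MeasurableSet s) (hμs : μ s ≠ 0)
    (hf : IntegrableOn f s μ) (hpos : ∀ x ∈ s, 0 < f x) : 0 < ∫ x in s, f x ∂μ := by
  rw [setIntegral_pos_iff_support_of_nonneg_ae
      (ae_restrict_of_forall_mem hs fun x hx => (hpos x hx).le) hf,
    inter_eq_right.mpr fun x hx => Function.mem_support.mpr (hpos x hx).ne']
  exact pos_iff_ne_zero.mpr hμs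

lemma setIntegral_lt_setIntegral_of_forall_lt (hs : MeasurableSet s) (hμs : μ s ≠ 0)
    (hf : IntegrableOn f s μ) (hg : IntegrableOn g s μ) (hlt : ∀ x ∈ s, f x < g x) :
    ∫ x in s, f x ∂μ < ∫ x in s, g x ∂μ := by
  have h := setIntegral_pos_of_forall_pos hs hμs (hg.sub hf) fun x hx => sub_pos.mpr (hlt x hx)
  rwa [Pi.sub_def, integral_sub hg hf, sub_pos] at h

end

noncomputable def gammaIntegrand (a t : ℝ) : ℝ := t ^ (a - 1) * exp (-t)

noncomputable def lowerGamma (a x : ℝ) : ℝ := ∫ t in Ioc 0 x, gammaIntegrand a t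

section

variable {a b x : ℝ}

lemma gammaIntegrand_pos (a : ℝ) {t : ℝ} (ht : 0 < t) : 0 < gammaIntegrand a t :=
  mul_pos (rpow_pos_of_pos ht _) (exp_pos _)

lemma rpow_sub_mul_gammaIntegrand (a b : ℝ) {t : ℝ} (ht : 0 < t) :
    t ^ (b - a) * gammaIntegrand a t = gammaIntegrand b t := by
  rw [gammaIntegrand, gammaIntegrand, ← mul_assoc, ← rpow_add ht]
  ring_nf

lemma upperGamma_eq_setIntegral (a x : ℝ) :
    upperGamma a x = ∫ t in Ioi x, gammaIntegrand a t :=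
  rfl

lemma integrableOn_gammaIntegrand (ha : 0 < a) : IntegrableOn (gammaIntegrand a) (Ioi 0) :=
  (GammaIntegral_convergent ha).congr_fun (fun _ _ => mul_comm _ _) measurableSet_Ioi

lemma Gamma_eq_lowerGamma_add_upperGamma (ha : 0 < a) (hx : 0 ≤ x) :
    Gamma a = lowerGamma a x + upperGamma a x := by
  have hint := integrableOn_gammaIntegrand ha
  rw [Gamma_eq_integral ha, lowerGamma, upperGamma_eq_setIntegral,
    ← setIntegral_union (Ioc_disjoint_Ioi le_rfl) measurableSet_Ioi
      (hint.mono_set Ioc_subset_Ioi_self) (hint.mono_set (Ioi_subset_Ioi hx)),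
    Ioc_union_Ioi_eq_Ioi hx]
  exact setIntegral_congr_fun measurableSet_Ioi fun _ _ => mul_comm _ _

lemma lowerGamma_pos (ha : 0 < a) (hx : 0 < x) : 0 < lowerGamma a x :=
  setIntegral_pos_of_forall_pos measurableSet_Ioc (by simp [hx])
    ((integrableOn_gammaIntegrand ha).mono_set Ioc_subset_Ioi_self)
    fun _ ht => gammaIntegrand_pos a ht.1

lemma upperGamma_pos (ha : 0 < a) (hx : 0 ≤ x) : 0 < upperGamma a x :=
  setIntegral_pos_of_forall_pos measurableSet_Ioi (by simp)
    ((integrableOn_gammaIntegrand ha).mono_set (Ioi_subset_Ioi hx))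
    fun _ ht => gammaIntegrand_pos a (hx.trans_lt ht)

lemma upperGamma_lt_Gamma (ha : 0 < a) (hx : 0 < x) : upperGamma a x < Gamma a := by
  rw [Gamma_eq_lowerGamma_add_upperGamma ha hx.le]
  linarith [lowerGamma_pos ha hx]

lemma lowerGamma_le_rpow_mul (ha : 0 < a) (hab : a ≤ b) :
    lowerGamma b x ≤ x ^ (b - a) * lowerGamma a x := by
  have hint := (integrableOn_gammaIntegrand ha).mono_set (Ioc_subset_Ioi_self : Ioc 0 x ⊆ Ioi 0)
  rw [lowerGamma, lowerGamma, ← integral_const_mul]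
  refine setIntegral_mono_on ((integrableOn_gammaIntegrand (ha.trans_le hab)).mono_set
    Ioc_subset_Ioi_self) (hint.const_mul _) measurableSet_Ioc fun t ht => ?_
  rw [← rpow_sub_mul_gammaIntegrand a b ht.1]
  exact mul_le_mul_of_nonneg_right (rpow_le_rpow ht.1.le ht.2 (sub_nonneg.mpr hab))
    (gammaIntegrand_pos a ht.1).le

lemma rpow_mul_upperGamma_lt (ha : 0 < a) (hab : a < b) (hx : 0 ≤ x) :
    x ^ (b - a) * upperGamma a x < upperGamma b x := by
  have hint := (integrableOn_gammaIntegrand ha).mono_set (Ioi_subset_Ioi hx)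
  rw [upperGamma_eq_setIntegral, upperGamma_eq_setIntegral, ← integral_const_mul]
  refine setIntegral_lt_setIntegral_of_forall_lt measurableSet_Ioi (by simp) (hint.const_mul _)
    ((integrableOn_gammaIntegrand (ha.trans hab)).mono_set (Ioi_subset_Ioi hx)) fun t ht => ?_
  have ht0 : 0 < t := hx.trans_lt ht
  rw [← rpow_sub_mul_gammaIntegrand a b ht0]
  exact mul_lt_mul_of_pos_right (rpow_lt_rpow hx ht (sub_pos.mpr hab)) (gammaIntegrand_pos a ht0)

lemma lowerGamma_div_Gamma_le (hx : 0 < x) (hb : 1 < b) :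
    lowerGamma b x / Gamma b ≤ lowerGamma 1 x / upperGamma 1 (2 * x) * (1 / 2) ^ (b - 1) := by
  have h2x : 0 < 2 * x := by positivity
  have hGamma : (2 * x) ^ (b - 1) * upperGamma 1 (2 * x) ≤ Gamma b :=
    ((rpow_mul_upperGamma_lt one_pos hb h2x.le).trans (upperGamma_lt_Gamma (by linarith) h2x)).le
  calc lowerGamma b x / Gamma b
      ≤ x ^ (b - 1) * lowerGamma 1 x / ((2 * x) ^ (b - 1) * upperGamma 1 (2 * x)) :=
        div_le_div₀ (by have := lowerGamma_pos one_pos hx; positivity)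
          (lowerGamma_le_rpow_mul one_pos hb.le)
          (mul_pos (rpow_pos_of_pos h2x _) (upperGamma_pos one_pos h2x.le)) hGamma
    _ = lowerGamma 1 x / upperGamma 1 (2 * x) * (x / (2 * x)) ^ (b - 1) := by
        rw [div_rpow hx.le h2x.le]; ring
    _ = lowerGamma 1 x / upperGamma 1 (2 * x) * (1 / 2) ^ (b - 1) := by
        rw [div_mul_cancel_right₀ hx.ne']; norm_num

lemma tendsto_lowerGamma_div_Gamma_atTop (hx : 0 < x) :
    Tendsto (fun a => lowerGamma a x / Gamma a) atTop (𝓝 0) := by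
  have hgeom : Tendsto (fun b : ℝ => (1 / 2 : ℝ) ^ (b - 1)) atTop (𝓝 0) :=
    (tendsto_rpow_atTop_of_base_lt_one _ (by norm_num) (by norm_num)).comp
      (tendsto_atTop_add_const_right _ (-1) tendsto_id)
  refine tendsto_of_tendsto_of_tendsto_of_le_of_le' tendsto_const_nhds
    (by simpa only [mul_zero] using hgeom.const_mul (lowerGamma 1 x / upperGamma 1 (2 * x))) ?_ ?_
  · filter_upwards [eventually_gt_atTop 0] with a ha
    exact div_nonneg (lowerGamma_pos ha hx).le (Gamma_pos_of_pos ha).le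
  · filter_upwards [eventually_gt_atTop 1] with b hb
    exact lowerGamma_div_Gamma_le hx hb

lemma regGamma_pos (ha : 0 < a) (hx : 0 ≤ x) : 0 < regGamma a x :=
  div_pos (upperGamma_pos ha hx) (Gamma_pos_of_pos ha)

lemma regGamma_lt_one (ha : 0 < a) (hx : 0 < x) : regGamma a x < 1 :=
  (div_lt_one (Gamma_pos_of_pos ha)).mpr (upperGamma_lt_Gamma ha hx)

lemma regGamma_eq_one_sub (ha : 0 < a) (hx : 0 ≤ x) :
    regGamma a x = 1 - lowerGamma a x / Gamma a := by
  have hG := (Gamma_pos_of_pos ha).ne'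
  rw [regGamma, eq_sub_iff_add_eq, ← add_div, add_comm,
    ← Gamma_eq_lowerGamma_add_upperGamma ha hx, div_self hG]

lemma regGamma_strictMonoOn (hx : 0 < x) : StrictMonoOn (regGamma · x) (Ioi 0) := by
  intro a (ha : 0 < a) b (hb : 0 < b) hab
  have hlow := lowerGamma_le_rpow_mul (x := x) ha hab.le
  have hup := rpow_mul_upperGamma_lt ha hab hx.le
  have hla := lowerGamma_pos ha hx
  have hua := upperGamma_pos ha hx.le
  simp only [regGamma]
  rw [div_lt_div_iff₀ (Gamma_pos_of_pos ha) (Gamma_pos_of_pos hb),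
    Gamma_eq_lowerGamma_add_upperGamma ha hx.le, Gamma_eq_lowerGamma_add_upperGamma hb hx.le]
  nlinarith [mul_le_mul_of_nonneg_left hlow hua.le, mul_lt_mul_of_pos_right hup hla]

lemma tendsto_regGamma_atTop (hx : 0 < x) : Tendsto (regGamma · x) atTop (𝓝 1) := by
  have h := (tendsto_lowerGamma_div_Gamma_atTop hx).const_sub 1
  rw [sub_zero] at h
  refine h.congr' ?_
  filter_upwards [eventually_gt_atTop 0] with a ha
  exact (regGamma_eq_one_sub ha hx.le).symm

end

/-- For fixed `λ > 0`, `a ↦ Q(a, λ)` is strictly increasing on `(0, ∞)`, tends to `1` at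
infinity, and satisfies `0 < Q(a, λ) < 1` for all `a > 0`. -/
theorem regGamma_strictMono_tendsto_one (lam : ℝ) (hlam : 0 < lam) :
    StrictMonoOn (fun a => regGamma a lam) (Set.Ioi 0) ∧
    Tendsto (fun a => regGamma a lam) atTop (nhds 1) ∧
    ∀ a : ℝ, 0 < a → 0 < regGamma a lam ∧ regGamma a lam < 1 :=
  ⟨regGamma_strictMonoOn hlam, tendsto_regGamma_atTop hlam,
    fun _ ha => ⟨regGamma_pos ha hlam.le, regGamma_lt_one ha hlam⟩⟩
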